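/- Let λ > 0 and data X_1,…,X_n ∈ ℝ^d, Y_1,…,Y_n ∈ ℝ be given. Let (e_j) be a sequence of positive reals with e_j → 0, and for each j let (μ_j,β_j) be a minimizer of L_{e_j} over ℝ × ℝ^d. If (μ_j,β_j) converges to some point (μ*,β*), then (μ*,β*) minimizes L(μ,β) = Σ_{i=1}^n |μ + ⟨X_i,β⟩ − Y_i| + (λ/2)‖β‖₂² over ℝ × ℝ^d. -/

import Mathlib

open scoped BigOperators
open Filter

/-- The perturbed ridge-penalized least-absolute-deviation objective
`L_e(μ,β) = Σ_i [ |r_i| − (e/2)·ln(e + |r_i|) ] + (λ/2)‖β‖₂²`,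
where `r_i = μ + ⟨X_i,β⟩ − Y_i`. -/
noncomputable def perturbedLAD {n d : ℕ} (e lam : ℝ) (X : Fin n → Fin d → ℝ)
    (Y : Fin n → ℝ) (p : ℝ × (Fin d → ℝ)) : ℝ :=
  (∑ i, (|p.1 + (∑ j, X i j * p.2 j) - Y i|
    - e / 2 * Real.log (e + |p.1 + (∑ j, X i j * p.2 j) - Y i|)))
    + lam / 2 * ∑ j, (p.2 j) ^ 2

/-- The unperturbed ridge-penalized least-absolute-deviation objective
`L(μ,β) = Σ_i |μ + ⟨X_i,β⟩ − Y_i| + (λ/2)‖β‖₂²`. -/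
noncomputable def ladObj {n d : ℕ} (lam : ℝ) (X : Fin n → Fin d → ℝ)
    (Y : Fin n → ℝ) (p : ℝ × (Fin d → ℝ)) : ℝ :=
  (∑ i, |p.1 + (∑ j, X i j * p.2 j) - Y i|) + lam / 2 * ∑ j, (p.2 j) ^ 2

/-!
Each term `e ln(e + |r_i|)` of the perturbation is squeezed between `e ln e` and
`e (e + |r_i| − 1)`, so it tends to `0` as `e → 0⁺` along any convergent sequence of points;
hence `L_{e_j}(q_j) → L(q)` whenever `q_j → q`. Passing to the limit in
`L_{e_j}(p_j) ≤ L_{e_j}(q)` then gives `L(p*) ≤ L(q)`.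
-/

open Topology

theorem isMinOn_of_tendsto {ι α β : Type*} [TopologicalSpace β] [Preorder β]
    [OrderClosedTopology β] {l : Filter ι} [l.NeBot] {f : ι → α → β} {F : α → β}
    {s : Set α} {p : ι → α} {x : α} (hmin : ∀ᶠ j in l, IsMinOn (f j) s (p j))
    (hlim : Tendsto (fun j => f j (p j)) l (𝓝 (F x)))
    (hpt : ∀ y ∈ s, Tendsto (fun j => f j y) l (𝓝 (F y))) :
    IsMinOn F s x :=
  fun y hy => le_of_tendsto_of_tendsto hlim (hpt y hy) (hmin.mono fun _ h => h hy)

theorem tendsto_mul_log_add_of_tendsto {ι : Type*} {l : Filter ι} {e a : ι → ℝ} {c : ℝ}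
    (he : Tendsto e l (𝓝[>] 0)) (ha : Tendsto a l (𝓝 c)) (ha0 : ∀ᶠ j in l, 0 ≤ a j) :
    Tendsto (fun j => e j * Real.log (e j + a j)) l (𝓝 0) := by
  have he0 : Tendsto e l (𝓝 0) := tendsto_nhds_of_tendsto_nhdsWithin he
  have hlower : Tendsto (fun j => e j * Real.log (e j)) l (𝓝 0) := by
    simpa [Function.comp_def] using (Real.continuous_mul_log.tendsto 0).comp he0
  have hupper : Tendsto (fun j => e j * (e j + a j - 1)) l (𝓝 0) := by
    simpa using he0.mul ((he0.add ha).sub_const 1)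
  refine tendsto_of_tendsto_of_tendsto_of_le_of_le' hlower hupper ?_ ?_
  all_goals
    filter_upwards [eventually_mem_of_tendsto_nhdsWithin he, ha0] with j (hej : 0 < e j) haj
    gcongr
  · linarith
  · exact Real.log_le_sub_one_of_pos (by linarith)

section LAD

variable {n d : ℕ} (lam : ℝ) (X : Fin n → Fin d → ℝ) (Y : Fin n → ℝ)

def ladResidual (p : ℝ × (Fin d → ℝ)) (i : Fin n) : ℝ :=
  p.1 + (∑ j, X i j * p.2 j) - Y i

theorem continuous_ladResidual (i : Fin n) :
    Continuous fun p : ℝ × (Fin d → ℝ) => ladResidual X Y p i := by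
  unfold ladResidual
  fun_prop

theorem continuous_ladObj : Continuous (ladObj lam X Y) := by
  unfold ladObj
  fun_prop

theorem perturbedLAD_eq_ladObj_sub (e : ℝ) (p : ℝ × (Fin d → ℝ)) :
    perturbedLAD e lam X Y p
      = ladObj lam X Y p - e / 2 * ∑ i, Real.log (e + |ladResidual X Y p i|) := by
  simp only [perturbedLAD, ladObj, ladResidual, Finset.sum_sub_distrib, Finset.mul_sum]
  ring

theorem tendsto_perturbedLAD {ι : Type*} {l : Filter ι} {e : ι → ℝ}
    (he : Tendsto e l (𝓝[>] 0)) {q : ι → ℝ × (Fin d → ℝ)} {q₀ : ℝ × (Fin d → ℝ)}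
    (hq : Tendsto q l (𝓝 q₀)) :
    Tendsto (fun j => perturbedLAD (e j) lam X Y (q j)) l (𝓝 (ladObj lam X Y q₀)) := by
  simp only [perturbedLAD_eq_ladObj_sub]
  have hcorr : Tendsto (fun j => e j * ∑ i, Real.log (e j + |ladResidual X Y (q j) i|))
      l (𝓝 0) := by
    simp only [Finset.mul_sum]
    simpa using tendsto_finsetSum Finset.univ fun i _ =>
      tendsto_mul_log_add_of_tendsto he
        ((continuous_ladResidual X Y i).abs.continuousAt.tendsto.comp hq)
        (.of_forall fun _ => abs_nonneg _)
  simpa [div_mul_eq_mul_div] using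
    ((continuous_ladObj lam X Y).continuousAt.tendsto.comp hq).sub (hcorr.div_const 2)

end LAD

theorem limit_of_perturbed_minimizers_minimizes_general {n d : ℕ} (lam : ℝ)
    (X : Fin n → Fin d → ℝ) (Y : Fin n → ℝ)
    (e : ℕ → ℝ) (he : ∀ j, 0 < e j) (he0 : Tendsto e atTop (nhds 0))
    (p : ℕ → ℝ × (Fin d → ℝ))
    (hmin : ∀ j, IsMinOn (perturbedLAD (e j) lam X Y) Set.univ (p j))
    (pstar : ℝ × (Fin d → ℝ)) (hconv : Tendsto p atTop (nhds pstar)) :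
    IsMinOn (ladObj lam X Y) Set.univ pstar := by
  have he' : Tendsto e atTop (𝓝[>] 0) :=
    tendsto_nhdsWithin_iff.2 ⟨he0, .of_forall he⟩
  exact isMinOn_of_tendsto (.of_forall hmin) (tendsto_perturbedLAD lam X Y he' hconv)
    fun q _ => tendsto_perturbedLAD lam X Y he' tendsto_const_nhds

/-- If `e_j → 0`, `(μ_j,β_j)` minimizes `L_{e_j}` for each `j`, and the
sequence `(μ_j,β_j)` converges to `(μ*,β*)`, then `(μ*,β*)` minimizes `L`. -/
theorem limit_of_perturbed_minimizers_minimizes {n d : ℕ} (lam : ℝ)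
    (hlam : 0 < lam) (X : Fin n → Fin d → ℝ) (Y : Fin n → ℝ)
    (e : ℕ → ℝ) (he : ∀ j, 0 < e j) (he0 : Tendsto e atTop (nhds 0))
    (p : ℕ → ℝ × (Fin d → ℝ))
    (hmin : ∀ j, IsMinOn (perturbedLAD (e j) lam X Y) Set.univ (p j))
    (pstar : ℝ × (Fin d → ℝ)) (hconv : Tendsto p atTop (nhds pstar)) :
    IsMinOn (ladObj lam X Y) Set.univ pstar :=
  limit_of_perturbed_minimizers_minimizes_general lam X Y e he he0 p hmin pstar hconv
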